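/- arXiv:1712.10142 — 2 statements merged into one kernel-verified Lean document; each statement's English description precedes it below -/
import Mathlib

section
/- Let C be an algebraically closed field and σ, τ irreducible smooth admissible representations of locally profinite groups G₁, G₂ over C whose endomorphism algebras are C (Schur's lemma). Then the external tensor product σ ⊗_C τ is an irreducible representation of G₁ × G₂. -/
open scoped TensorProduct

section Defs

variable {C G V : Type*} [CommRing C] [Group G]
  [AddCommGroup V] [Module C V]

/-- A submodule stable under the group action. -/
def IsSubrep (ρ : Representation C G V) (W : Submodule C V) : Prop :=
  ∀ g : G, ∀ v ∈ W, ρ g v ∈ W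

/-- An irreducible (simple, nonzero) representation. -/
def IsIrreducibleRep (ρ : Representation C G V) : Prop :=
  Nontrivial V ∧ ∀ W : Submodule C V, IsSubrep ρ W → W = ⊥ ∨ W = ⊤

variable [TopologicalSpace G]

/-- A representation is smooth if every vector is fixed by some open subgroup. -/
def IsSmoothRep (ρ : Representation C G V) : Prop :=
  ∀ v : V, ∃ U : Subgroup G, IsOpen (U : Set G) ∧ ∀ g ∈ U, ρ g v = v

/-- The submodule of `K`-invariant vectors. -/
def repInvariants (ρ : Representation C G V) (K : Subgroup G) : Submodule C V where
  carrier := {v | ∀ g ∈ K, ρ g v = v}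
  zero_mem' := by intro g _; simp
  add_mem' := by intro a b ha hb g hg; simp [map_add, ha g hg, hb g hg]
  smul_mem' := by intro c a ha g hg; simp [map_smul, ha g hg]

/-- A smooth representation is admissible if the `K`-invariants are
finite-dimensional for every open compact subgroup `K`. -/
def IsAdmissibleRep (ρ : Representation C G V) : Prop :=
  IsSmoothRep ρ ∧ ∀ K : Subgroup G, IsOpen (K : Set G) → IsCompact (K : Set G) →
    Module.Finite C (repInvariants ρ K)

end Defs

/-- The external tensor product of two representations. -/
noncomputable def extTensorRep {C G₁ G₂ V₁ V₂ : Type*} [CommRing C]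
    [Group G₁] [Group G₂]
    [AddCommGroup V₁] [Module C V₁] [AddCommGroup V₂] [Module C V₂]
    (σ : Representation C G₁ V₁) (τ : Representation C G₂ V₂) :
    Representation C (G₁ × G₂) (V₁ ⊗[C] V₂) where
  toFun p := TensorProduct.map (σ p.1) (τ p.2)
  map_one' := by simp [TensorProduct.map_id]
  map_mul' p q := by
    simp only [Prod.fst_mul, Prod.snd_mul, map_mul]
    exact TensorProduct.map_mul (σ p.1) (σ q.1) (τ p.2) (τ q.2)


/-! A nonzero invariant subspace `W ⊆ V₁ ⊗ V₂` contains a nonzero pure tensor: among the nonzero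
elements of `W`, take one with the fewest nonzero coordinates in a basis of `V₂`; Schur's lemma
for `σ`, applied to the cyclic module generated by one of its coordinates, shows that all its
coordinates are proportional. Irreducibility of `σ` and then of `τ` spreads that pure tensor to
all of `V₁ ⊗ V₂`. -/

open TensorProduct

def HasScalarCommutant {C G V : Type*} [CommRing C] [Group G] [AddCommGroup V] [Module C V]
    (ρ : Representation C G V) : Prop :=
  ∀ f : V →ₗ[C] V, (∀ g : G, f ∘ₗ ρ g = ρ g ∘ₗ f) → ∃ c : C, f = c • LinearMap.id

theorem LinearMap.exists_comp_eq_of_ker_le {R M N P : Type*} [CommRing R]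
    [AddCommGroup M] [Module R M] [AddCommGroup N] [Module R N] [AddCommGroup P] [Module R P]
    {f : M →ₗ[R] N} (hf : Function.Surjective f) {g : M →ₗ[R] P} (h : ker f ≤ ker g) :
    ∃ k : N →ₗ[R] P, k ∘ₗ f = g :=
  ⟨(ker f).liftQ g h ∘ₗ (f.quotKerEquivOfSurjective hf).symm.toLinearMap, by
    ext x
    have : (f.quotKerEquivOfSurjective hf).symm (f x) = Submodule.Quotient.mk x :=
      (LinearEquiv.symm_apply_eq _).mpr rfl
    simp [this]⟩

section Irreducible

variable {C G V : Type*} [CommRing C] [Group G] [AddCommGroup V] [Module C V]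
  {ρ : Representation C G V}

theorem IsIrreducibleRep.eq_top_of_mem (hρ : IsIrreducibleRep ρ) {W : Submodule C V}
    (hW : IsSubrep ρ W) {v : V} (hvW : v ∈ W) (hv : v ≠ 0) : W = ⊤ :=
  (hρ.2 W hW).resolve_left fun h => hv (by simpa [h] using hvW)

noncomputable def Representation.orbitMap (ρ : Representation C G V) (v : V) :
    MonoidAlgebra C G →ₗ[C] V :=
  LinearMap.applyₗ v ∘ₗ ρ.asAlgebraHom.toLinearMap

@[simp]
theorem Representation.orbitMap_apply (v : V) (a : MonoidAlgebra C G) :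
    ρ.orbitMap v a = ρ.asAlgebraHom a v :=
  rfl

theorem Representation.orbitMap_of_mul (v : V) (g : G) (a : MonoidAlgebra C G) :
    ρ.orbitMap v (MonoidAlgebra.of C G g * a) = ρ g (ρ.orbitMap v a) := by
  simp [Module.End.mul_apply]

theorem Representation.isSubrep_range_orbitMap (v : V) :
    IsSubrep ρ (LinearMap.range (ρ.orbitMap v)) := by
  rintro g _ ⟨a, rfl⟩
  exact ⟨MonoidAlgebra.of C G g * a, ρ.orbitMap_of_mul v g a⟩

theorem IsIrreducibleRep.orbitMap_surjective (hρ : IsIrreducibleRep ρ) {v : V} (hv : v ≠ 0) :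
    Function.Surjective (ρ.orbitMap v) :=
  LinearMap.range_eq_top.mp <|
    hρ.eq_top_of_mem (ρ.isSubrep_range_orbitMap v) ⟨1, by simp⟩ hv

/-- If `ker (a ↦ a • v) ≤ ker (a ↦ a • w)`, then `a • v ↦ a • w` is a well-defined
endomorphism commuting with `ρ`, hence a scalar. -/
theorem IsIrreducibleRep.exists_eq_smul_of_ker_orbitMap_le (hρ : IsIrreducibleRep ρ)
    (hρC : HasScalarCommutant ρ) {v w : V} (hv : v ≠ 0)
    (h : LinearMap.ker (ρ.orbitMap v) ≤ LinearMap.ker (ρ.orbitMap w)) :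
    ∃ c : C, w = c • v := by
  have hsurj := hρ.orbitMap_surjective hv
  obtain ⟨f, hf⟩ := LinearMap.exists_comp_eq_of_ker_le hsurj h
  have hf' (a : MonoidAlgebra C G) : f (ρ.orbitMap v a) = ρ.orbitMap w a :=
    LinearMap.congr_fun hf a
  have hcomm (g : G) : f ∘ₗ ρ g = ρ g ∘ₗ f := by
    ext x
    obtain ⟨a, rfl⟩ := hsurj x
    simp only [LinearMap.comp_apply, ← Representation.orbitMap_of_mul, hf']
  obtain ⟨c, rfl⟩ := hρC f hcomm
  exact ⟨c, by simpa using (hf' 1).symm⟩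

end Irreducible

theorem TensorProduct.equivFinsuppOfBasisRight_rTensor {R M N ι : Type*} [CommRing R]
    [AddCommGroup M] [Module R M] [AddCommGroup N] [Module R N] [DecidableEq ι]
    (b : Module.Basis ι R N) (f : M →ₗ[R] M) (t : M ⊗[R] N) :
    equivFinsuppOfBasisRight b (f.rTensor N t) =
      Finsupp.mapRange f f.map_zero (equivFinsuppOfBasisRight b t) := by
  induction t using TensorProduct.induction_on with
  | zero => simp
  | tmul x y => ext i; simp
  | add x y hx hy => ext i; simp [hx, hy]

theorem TensorProduct.exists_eq_tmul_of_equivFinsuppOfBasisRight_eq_smul {R M N ι : Type*}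
    [CommRing R] [AddCommGroup M] [Module R M] [AddCommGroup N] [Module R N] [DecidableEq ι]
    (b : Module.Basis ι R N) {t : M ⊗[R] N} {v : M} {c : ι → R}
    (h : ∀ i, equivFinsuppOfBasisRight b t i = c i • v) : ∃ u : N, t = v ⊗ₜ u := by
  refine ⟨∑ i ∈ (equivFinsuppOfBasisRight b t).support, c i • b i, ?_⟩
  conv_lhs => rw [← (equivFinsuppOfBasisRight b).symm_apply_apply t,
    equivFinsuppOfBasisRight_symm_apply, Finsupp.sum]
  simp only [h, tmul_sum, smul_tmul]

section ExternalTensor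

variable {C G₁ G₂ V₁ V₂ : Type*} [CommRing C] [Group G₁] [Group G₂]
  [AddCommGroup V₁] [Module C V₁] [AddCommGroup V₂] [Module C V₂]
  {σ : Representation C G₁ V₁} {τ : Representation C G₂ V₂} {W : Submodule C (V₁ ⊗[C] V₂)}

@[simp]
theorem extTensorRep_apply (g : G₁ × G₂) : extTensorRep σ τ g = map (σ g.1) (τ g.2) :=
  rfl

theorem IsSubrep.rTensor_asAlgebraHom_mem (hW : IsSubrep (extTensorRep σ τ) W)
    (a : MonoidAlgebra C G₁) {t : V₁ ⊗[C] V₂} (ht : t ∈ W) :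
    (σ.asAlgebraHom a).rTensor V₂ t ∈ W := by
  induction a using MonoidAlgebra.induction_on generalizing t with
  | of g => simpa [LinearMap.rTensor, Module.End.one_eq_id] using hW (g, 1) t ht
  | add x y hx hy =>
    simpa only [map_add, LinearMap.rTensor_add, LinearMap.add_apply] using W.add_mem (hx ht) (hy ht)
  | smul r x hx =>
    simpa only [map_smul, LinearMap.rTensor_smul, LinearMap.smul_apply] using W.smul_mem r (hx ht)

theorem IsSubrep.comap_mk_flip (hW : IsSubrep (extTensorRep σ τ) W) (u : V₂) :
    IsSubrep σ (W.comap ((TensorProduct.mk C V₁ V₂).flip u)) := by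
  intro g x hx
  simpa using hW (g, 1) _ hx

theorem IsSubrep.comap_mk (hW : IsSubrep (extTensorRep σ τ) W) (x : V₁) :
    IsSubrep τ (W.comap (TensorProduct.mk C V₁ V₂ x)) := by
  intro g y hy
  simpa using hW (1, g) _ hy

theorem eq_top_of_tmul_mem (hσ : IsIrreducibleRep σ) (hτ : IsIrreducibleRep τ)
    (hW : IsSubrep (extTensorRep σ τ) W) {v : V₁} {u : V₂} (hv : v ≠ 0) (hu : u ≠ 0)
    (hvu : v ⊗ₜ[C] u ∈ W) : W = ⊤ := by
  have hleft (x : V₁) : x ⊗ₜ[C] u ∈ W :=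
    Submodule.eq_top_iff'.mp (hσ.eq_top_of_mem (hW.comap_mk_flip u) hvu hv) x
  have htmul (x : V₁) (y : V₂) : x ⊗ₜ[C] y ∈ W :=
    Submodule.eq_top_iff'.mp (hτ.eq_top_of_mem (hW.comap_mk x) (hleft x) hu) y
  rw [eq_top_iff, ← span_tmul_eq_top, Submodule.span_le]
  rintro _ ⟨x, y, rfl⟩
  exact htmul x y

end ExternalTensor

theorem exists_tmul_mem {C G₁ G₂ V₁ V₂ : Type*} [Field C] [Group G₁] [Group G₂]
    [AddCommGroup V₁] [Module C V₁] [AddCommGroup V₂] [Module C V₂]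
    {σ : Representation C G₁ V₁} {τ : Representation C G₂ V₂} {W : Submodule C (V₁ ⊗[C] V₂)}
    (hσ : IsIrreducibleRep σ) (hσC : HasScalarCommutant σ)
    (hW : IsSubrep (extTensorRep σ τ) W) (hW₀ : W ≠ ⊥) :
    ∃ v u, v ≠ 0 ∧ u ≠ 0 ∧ v ⊗ₜ[C] u ∈ W := by
  classical
  let φ := equivFinsuppOfBasisRight (M := V₁) (Module.Basis.ofVectorSpace C V₂)
  let S : Set (V₁ ⊗[C] V₂) := {t | t ∈ W ∧ t ≠ 0}
  have hS : S.Nonempty := Submodule.exists_mem_ne_zero_of_ne_bot hW₀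
  set t := Function.argminOn (fun t => (φ t).support.card) S hS
  obtain ⟨htW, ht₀⟩ : t ∈ S := Function.argminOn_mem _ _ _
  obtain ⟨i₀, hi₀⟩ : (φ t).support.Nonempty := by simpa [φ] using ht₀
  set v := φ t i₀
  have hv : v ≠ 0 := Finsupp.mem_support_iff.mp hi₀
  have hker (i) : LinearMap.ker (σ.orbitMap v) ≤ LinearMap.ker (σ.orbitMap (φ t i)) := by
    intro a (ha : σ.asAlgebraHom a v = 0)
    -- `a • t ∈ W` has lost the coordinate `i₀`, so by minimality of `t` it vanishes.
    have hzero : (σ.asAlgebraHom a).rTensor V₂ t = 0 := by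
      by_contra hne
      have hmin := Function.argminOn_le (fun t => (φ t).support.card) S
        ⟨hW.rTensor_asAlgebraHom_mem a htW, hne⟩
      have hsub : (φ ((σ.asAlgebraHom a).rTensor V₂ t)).support ⊆ (φ t).support.erase i₀ := by
        intro i hi
        simp only [φ, equivFinsuppOfBasisRight_rTensor, Finsupp.mem_support_iff,
          Finsupp.mapRange_apply] at hi
        exact Finset.mem_erase.mpr ⟨by rintro rfl; exact hi ha,
          Finsupp.mem_support_iff.mpr fun h => hi (by rw [h, map_zero])⟩
      exact (hmin.trans_lt ((Finset.card_le_card hsub).trans_lt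
        (Finset.card_erase_lt_of_mem hi₀))).false
    simpa [φ, equivFinsuppOfBasisRight_rTensor] using DFunLike.congr_fun (congrArg φ hzero) i
  choose c hc using fun i => hσ.exists_eq_smul_of_ker_orbitMap_le hσC hv (hker i)
  obtain ⟨u, htu⟩ := exists_eq_tmul_of_equivFinsuppOfBasisRight_eq_smul _ hc
  exact ⟨v, u, hv, fun hu => ht₀ (by rw [htu, hu, tmul_zero]), htu ▸ htW⟩

theorem extTensor_irreducible_general
    {C G₁ G₂ V₁ V₂ : Type*} [Field C]
    [Group G₁]
    [Group G₂]
    [AddCommGroup V₁] [Module C V₁] [AddCommGroup V₂] [Module C V₂]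
    (σ : Representation C G₁ V₁) (τ : Representation C G₂ V₂)
    (hσirr : IsIrreducibleRep σ) (hτirr : IsIrreducibleRep τ)
    (hσSchur : ∀ f : V₁ →ₗ[C] V₁, (∀ g : G₁, f ∘ₗ σ g = σ g ∘ₗ f) →
      ∃ c : C, f = c • LinearMap.id) :
    IsIrreducibleRep (extTensorRep σ τ) := by
  have := hσirr.1
  have := hτirr.1
  refine ⟨inferInstance, fun W hW => or_iff_not_imp_left.mpr fun hW₀ => ?_⟩
  obtain ⟨v, u, hv, hu, hvu⟩ := exists_tmul_mem hσirr hσSchur hW hW₀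
  exact eq_top_of_tmul_mem hσirr hτirr hW hv hu hvu

/-- Let `C` be an algebraically closed field and `σ, τ` irreducible smooth
admissible representations of locally profinite groups `G₁, G₂` whose
endomorphism algebras are `C` (Schur's lemma).  Then the external tensor
product `σ ⊗_C τ` is an irreducible representation of `G₁ × G₂`. -/
theorem extTensor_irreducible
    {C G₁ G₂ V₁ V₂ : Type*} [Field C] [IsAlgClosed C]
    [Group G₁] [TopologicalSpace G₁] [IsTopologicalGroup G₁]
    [Group G₂] [TopologicalSpace G₂] [IsTopologicalGroup G₂]
    [AddCommGroup V₁] [Module C V₁] [AddCommGroup V₂] [Module C V₂]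
    (σ : Representation C G₁ V₁) (τ : Representation C G₂ V₂)
    (hσadm : IsAdmissibleRep σ) (hτadm : IsAdmissibleRep τ)
    (hσirr : IsIrreducibleRep σ) (hτirr : IsIrreducibleRep τ)
    (hσSchur : ∀ f : V₁ →ₗ[C] V₁, (∀ g : G₁, f ∘ₗ σ g = σ g ∘ₗ f) →
      ∃ c : C, f = c • LinearMap.id)
    (hτSchur : ∀ f : V₂ →ₗ[C] V₂, (∀ g : G₂, f ∘ₗ τ g = τ g ∘ₗ f) →
      ∃ c : C, f = c • LinearMap.id) :
    IsIrreducibleRep (extTensorRep σ τ) :=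
  extTensor_irreducible_general σ τ hσirr hτirr hσSchur
end

section
/- Let A and B be algebras over an algebraically closed field C. Every finite-dimensional simple module over the tensor product algebra A ⊗_C B is isomorphic to an external tensor product M ⊗_C N of a simple A-module M and a simple B-module N. -/
/-!
Restrict `M` to `A` and to `B` and pick a simple `A`-submodule `S ⊆ M`. The `S`-isotypic
component of `M` is stable under the (`A`-linear) action of `B`, so it is all of `M` and
`M ≅ Sⁿ` over `A`. Schur's lemma over the algebraically closed field `C` gives `End_A S = C`,
so `Hom_A(S, M) ≅ Cⁿ` and `S ⊗ Hom_A(S, M)` has the dimension of `M`. For any nonzero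
`B`-submodule `Q ⊆ Hom_A(S, M)`, the images of the maps in `Q` span an `A ⊗ B`-submodule of
`M`, so the evaluation `S ⊗ Q → M` is onto. For `Q = Hom_A(S, M)` this makes evaluation an
isomorphism intertwining `a ⊗ b` with `(a • ·) ⊗ (b • ·)`; in general it forces
`dim Q ≥ n`, so `Hom_A(S, M)` is a simple `B`-module.
-/

open scoped TensorProduct

universe u v

/-- A factorization of a module `M` over `A ⊗[C] B` as an external tensor
product `M₁ ⊗_C M₂` of a simple `A`-module `M₁` and a simple `B`-module `M₂`:
a `C`-linear equivalence `M ≃ M₁ ⊗_C M₂` intertwining the action of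
`a ⊗ b ∈ A ⊗[C] B` with `(a • ·) ⊗ (b • ·)`. -/
structure ExtTensorFactorization (C : Type u) [Field C]
    (A B : Type u) [Ring A] [Ring B] [Algebra C A] [Algebra C B]
    (M : Type u) [AddCommGroup M] [Module (A ⊗[C] B) M]
    [Module C M] [IsScalarTower C (A ⊗[C] B) M] : Type (u + 1) where
  M₁ : Type u
  M₂ : Type u
  [acg₁ : AddCommGroup M₁]
  [acg₂ : AddCommGroup M₂]
  [modC₁ : Module C M₁]
  [modC₂ : Module C M₂]
  [modA : Module A M₁]
  [modB : Module B M₂]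
  [scc₁ : SMulCommClass A C M₁]
  [scc₂ : SMulCommClass B C M₂]
  simple₁ : IsSimpleModule A M₁
  simple₂ : IsSimpleModule B M₂
  equiv : M ≃ₗ[C] (M₁ ⊗[C] M₂)
  equiv_smul : ∀ (a : A) (b : B) (m : M),
    equiv ((a ⊗ₜ[C] b) • m) =
      TensorProduct.map (DistribMulAction.toLinearMap C M₁ a)
        (DistribMulAction.toLinearMap C M₂ b) (equiv m)

attribute [instance] ExtTensorFactorization.acg₁ ExtTensorFactorization.acg₂
  ExtTensorFactorization.modC₁ ExtTensorFactorization.modC₂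
  ExtTensorFactorization.modA ExtTensorFactorization.modB
  ExtTensorFactorization.scc₁ ExtTensorFactorization.scc₂

open Module

section Finiteness

variable {C A M : Type*} [Field C] [Ring A] [Algebra C A]
  [AddCommGroup M] [Module C M] [Module A M] [IsScalarTower C A M] [FiniteDimensional C M]

instance Submodule.finiteDimensional_of_isScalarTower (S : Submodule A M) : FiniteDimensional C S :=
  .of_injective ((S.subtype).restrictScalars C) S.injective_subtype

instance LinearMap.finiteDimensional_of_isScalarTower {N : Type*} [AddCommGroup N]
    [Module C N] [Module A N] [IsScalarTower C A N] [FiniteDimensional C N] :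
    FiniteDimensional C (N →ₗ[A] M) :=
  .of_injective (LinearMap.restrictScalarsₗ C A N M C) (LinearMap.restrictScalars_injective C)

end Finiteness

section Schur

variable (C : Type*) {A S : Type*} [Field C] [Ring A] [Algebra C A]
  [AddCommGroup S] [Module C S] [Module A S] [IsScalarTower C A S]

def LinearEquiv.linearMapCongrRight {M N : Type*} [AddCommGroup M] [Module C M] [Module A M]
    [IsScalarTower C A M] [AddCommGroup N] [Module C N] [Module A N] [IsScalarTower C A N]
    (e : M ≃ₗ[A] N) : (S →ₗ[A] M) ≃ₗ[C] (S →ₗ[A] N) where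
  __ := (LinearEquiv.refl A S).arrowCongrAddEquiv e
  map_smul' c f := LinearMap.ext fun s => e.map_smul_of_tower c (f s)

variable [IsAlgClosed C] [IsSimpleModule A S] [FiniteDimensional C S]

theorem IsSimpleModule.finrank_end_eq_one_of_isAlgClosed : finrank C (Module.End A S) = 1 :=
  (LinearEquiv.ofBijective (Algebra.linearMap C (Module.End A S))
    (IsSimpleModule.algebraMap_end_bijective_of_isAlgClosed C)).finrank_eq.symm.trans
    (finrank_self C)

theorem IsSimpleModule.finrank_mul_finrank_linearMap_of_isAlgClosed {M : Type*} [AddCommGroup M]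
    [Module C M] [Module A M] [IsScalarTower C A M] {n : ℕ} (e : M ≃ₗ[A] (Fin n → S)) :
    finrank C S * finrank C (S →ₗ[A] M) = finrank C M := by
  rw [(e.linearMapCongrRight C).finrank_eq,
    ← (LinearEquiv.linearMapPi (M₂ := S) (φ := fun _ : Fin n => S) C).finrank_eq,
    (e.restrictScalars C).finrank_eq, finrank_pi_fintype, finrank_pi_fintype,
    IsSimpleModule.finrank_end_eq_one_of_isAlgClosed C]
  simp [mul_comm]

end Schur

section TensorAction

variable {C A B M : Type*} [Field C] [Ring A] [Ring B] [Algebra C A] [Algebra C B]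
  [AddCommGroup M] [Module A M] [Module B M] [Module (A ⊗[C] B) M]

theorem smulCommClass_of_tmul_smul
    (hAB : ∀ (a : A) (b : B) (m : M), (a ⊗ₜ[C] b) • m = a • b • m) :
    SMulCommClass A B M where
  smul_comm a b m := by
    have hA (a : A) (m : M) : (a ⊗ₜ[C] (1 : B)) • m = a • m := by rw [hAB, one_smul]
    have hB (b : B) (m : M) : ((1 : A) ⊗ₜ[C] b) • m = b • m := by rw [hAB, one_smul]
    rw [← hAB, ← hA, ← hB, ← mul_smul, Algebra.TensorProduct.tmul_mul_tmul, one_mul,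
      mul_one]

theorem isScalarTower_left_of_tmul_smul [Module C M] [IsScalarTower C (A ⊗[C] B) M]
    (hAB : ∀ (a : A) (b : B) (m : M), (a ⊗ₜ[C] b) • m = a • b • m) :
    IsScalarTower C A M where
  smul_assoc c a m := by
    have hA (a : A) (m : M) : (a ⊗ₜ[C] (1 : B)) • m = a • m := by rw [hAB, one_smul]
    rw [← hA, ← hA, ← TensorProduct.smul_tmul', smul_assoc]

theorem isScalarTower_right_of_tmul_smul [Module C M] [IsScalarTower C (A ⊗[C] B) M]
    (hAB : ∀ (a : A) (b : B) (m : M), (a ⊗ₜ[C] b) • m = a • b • m) :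
    IsScalarTower C B M where
  smul_assoc c b m := by
    have hB (b : B) (m : M) : ((1 : A) ⊗ₜ[C] b) • m = b • m := by rw [hAB, one_smul]
    rw [← hB, ← hB, TensorProduct.tmul_smul, smul_assoc]

theorem Submodule.eq_bot_or_eq_top_of_smul_mem [IsSimpleModule (A ⊗[C] B) M]
    (hAB : ∀ (a : A) (b : B) (m : M), (a ⊗ₜ[C] b) • m = a • b • m) (P : Submodule A M)
    (hP : ∀ (b : B), ∀ x ∈ P, b • x ∈ P) : P = ⊥ ∨ P = ⊤ := by
  let P' : Submodule (A ⊗[C] B) M :=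
    { P.toAddSubmonoid with
      smul_mem' r x hx := by
        induction r using TensorProduct.induction_on with
        | zero => simp
        | tmul a b => rw [hAB]; exact P.smul_mem a (hP b x hx)
        | add r s hr hs => rw [add_smul]; exact P.add_mem hr hs }
  have hP' (x : M) : x ∈ P' ↔ x ∈ P := Iff.rfl
  refine (eq_bot_or_eq_top P').imp (fun h => ?_) (fun h => ?_) <;>
    ext x <;> simp [← hP', h]

end TensorAction

section Evaluation

variable (C A : Type*) [Field C] [Ring A] [Algebra C A]
  (S M : Type*) [AddCommGroup S] [Module C S] [Module A S] [IsScalarTower C A S]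
  [AddCommGroup M] [Module C M] [Module A M] [IsScalarTower C A M]

def tensorHomEval : S ⊗[C] (S →ₗ[A] M) →ₗ[C] M :=
  TensorProduct.lift (LinearMap.applyₗ.compl₂ (LinearMap.restrictScalarsₗ C A S M C))

@[simp]
theorem tensorHomEval_tmul (s : S) (f : S →ₗ[A] M) : tensorHomEval C A S M (s ⊗ₜ f) = f s :=
  rfl

theorem tensorHomEval_map_smul {B : Type*} [Ring B] [Algebra C B] [Module B M]
    [IsScalarTower C B M] [SMulCommClass A B M] [Module (A ⊗[C] B) M]
    (hAB : ∀ (a : A) (b : B) (m : M), (a ⊗ₜ[C] b) • m = a • b • m)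
    (a : A) (b : B) (y : S ⊗[C] (S →ₗ[A] M)) :
    tensorHomEval C A S M (TensorProduct.map (DistribSMul.toLinearMap C S a)
        (DistribSMul.toLinearMap C (S →ₗ[A] M) b) y) =
      (a ⊗ₜ[C] b) • tensorHomEval C A S M y := by
  induction y using TensorProduct.induction_on with
  | zero => simp
  | tmul s f => simp [hAB, smul_comm a b]
  | add y z hy hz => rw [map_add, map_add, hy, hz, map_add, smul_add]

end Evaluation

theorem Submodule.nontrivial_linearMap_of_isSimpleModule {A M : Type*} [Ring A] [AddCommGroup M]
    [Module A M] (S : Submodule A M) [IsSimpleModule A S] : Nontrivial (S →ₗ[A] M) :=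
  nontrivial_of_ne S.subtype 0 fun h => (isSimpleModule_iff_isAtom.mp ‹_›).1 <| by
    rw [← S.range_subtype, h, LinearMap.range_zero]

section Factorization

variable {C A B M : Type*} [Field C] [Ring A] [Ring B] [Algebra C A] [Algebra C B]
  [AddCommGroup M] [Module C M] [Module A M] [Module B M] [IsScalarTower C A M]
  [SMulCommClass A B M] [Module (A ⊗[C] B) M] [IsSimpleModule (A ⊗[C] B) M]

theorem exists_linearEquiv_fin_fun_of_isSimpleModule [FiniteDimensional C M]
    (hAB : ∀ (a : A) (b : B) (m : M), (a ⊗ₜ[C] b) • m = a • b • m)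
    (S : Submodule A M) [IsSimpleModule A S] :
    ∃ n : ℕ, Nonempty (M ≃ₗ[A] (Fin n → S)) := by
  have htop : isotypicComponent A M S = ⊤ :=
    (Submodule.eq_bot_or_eq_top_of_smul_mem hAB _ fun b _ hx =>
      Submodule.mem_comap.mp <|
        LinearMap.le_comap_isotypicComponent S (b • LinearMap.id : Module.End A M) hx)
      |>.resolve_left (bot_lt_isotypicComponent S).ne'
  have : IsSemisimpleModule A M :=
    .congr (Submodule.topEquiv.symm.trans (LinearEquiv.ofEq _ _ htop.symm))
  have : Module.Finite A M := .of_restrictScalars_finite C A M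
  exact (IsIsotypicOfType.of_isotypicComponent_eq_top htop).linearEquiv_fun

theorem finrank_mul_finrank_linearMap_of_isSimpleModule [IsAlgClosed C] [FiniteDimensional C M]
    (hAB : ∀ (a : A) (b : B) (m : M), (a ⊗ₜ[C] b) • m = a • b • m)
    (S : Submodule A M) [IsSimpleModule A S] :
    finrank C S * finrank C (S →ₗ[A] M) = finrank C M := by
  obtain ⟨n, ⟨e⟩⟩ := exists_linearEquiv_fin_fun_of_isSimpleModule hAB S
  exact IsSimpleModule.finrank_mul_finrank_linearMap_of_isAlgClosed C e

variable [IsScalarTower C B M]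

theorem range_tensorHomEval_comp_lTensor_eq_top
    (hAB : ∀ (a : A) (b : B) (m : M), (a ⊗ₜ[C] b) • m = a • b • m)
    {S : Type*} [AddCommGroup S] [Module C S] [Module A S] [IsScalarTower C A S]
    {Q : Submodule B (S →ₗ[A] M)} (hQ : Q ≠ ⊥) :
    LinearMap.range
      (tensorHomEval C A S M ∘ₗ (Q.subtype.restrictScalars C).lTensor S) = ⊤ := by
  let P : Submodule A M := ⨆ f : Q, LinearMap.range (f : S →ₗ[A] M)
  have hPB (b : B) (x : M) (hx : x ∈ P) : b • x ∈ P := by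
    refine Submodule.iSup_induction _ (motive := fun x => b • x ∈ P) hx ?_ (by simp) ?_
    · rintro f _ ⟨s, rfl⟩
      exact Submodule.mem_iSup_of_mem ⟨b • f, Q.smul_mem b f.2⟩ ⟨s, rfl⟩
    · intro x y hx hy
      rw [smul_add]
      exact add_mem hx hy
  have hP : P ≠ ⊥ := by
    obtain ⟨f, hfQ, hf⟩ := Q.ne_bot_iff.mp hQ
    exact ne_bot_of_le_ne_bot (LinearMap.range_eq_bot.not.mpr hf)
      (le_iSup (fun f : Q => LinearMap.range (f : S →ₗ[A] M)) ⟨f, hfQ⟩)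
  have hPtop := (Submodule.eq_bot_or_eq_top_of_smul_mem hAB P hPB).resolve_left hP
  refine eq_top_iff.mpr fun x _ => Submodule.iSup_induction _
    (motive := (· ∈ LinearMap.range _)) (hPtop ▸ Submodule.mem_top : x ∈ P) ?_ (zero_mem _)
    fun _ _ => add_mem
  rintro f _ ⟨s, rfl⟩
  exact ⟨s ⊗ₜ f, by simp⟩

variable [IsAlgClosed C] [FiniteDimensional C M]

theorem bijective_tensorHomEval
    (hAB : ∀ (a : A) (b : B) (m : M), (a ⊗ₜ[C] b) • m = a • b • m)
    (S : Submodule A M) [IsSimpleModule A S] : Function.Bijective (tensorHomEval C A S M) := by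
  have := S.nontrivial_linearMap_of_isSimpleModule
  have hsurj : Function.Surjective (tensorHomEval C A S M) := by
    rw [← LinearMap.range_eq_top, eq_top_iff,
      ← range_tensorHomEval_comp_lTensor_eq_top hAB (S := S) (Q := ⊤) top_ne_bot]
    exact LinearMap.range_comp_le_range _ _
  refine ⟨(LinearMap.injective_iff_surjective_of_finrank_eq_finrank ?_).mpr hsurj, hsurj⟩
  rw [finrank_tensorProduct, finrank_mul_finrank_linearMap_of_isSimpleModule hAB S]

theorem isSimpleModule_linearMap
    (hAB : ∀ (a : A) (b : B) (m : M), (a ⊗ₜ[C] b) • m = a • b • m)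
    (S : Submodule A M) [IsSimpleModule A S] : IsSimpleModule B (S →ₗ[A] M) := by
  have := S.nontrivial_linearMap_of_isSimpleModule
  refine { eq_bot_or_eq_top := fun Q => or_iff_not_imp_left.mpr fun hQ => ?_ }
  have hle : finrank C S * finrank C (S →ₗ[A] M) ≤ finrank C S * finrank C Q := by
    rw [finrank_mul_finrank_linearMap_of_isSimpleModule hAB S, ← finrank_tensorProduct]
    exact LinearMap.finrank_le_finrank_of_surjective
      (LinearMap.range_eq_top.mp (range_tensorHomEval_comp_lTensor_eq_top hAB hQ))
  have := IsSimpleModule.nontrivial A S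
  rw [← Submodule.restrictScalars_eq_top_iff C]
  exact Submodule.eq_top_of_finrank_eq
    (le_antisymm (Submodule.finrank_le _) (Nat.le_of_mul_le_mul_left hle finrank_pos))

end Factorization

noncomputable def ExtTensorFactorization.ofIsSimpleModule {C A B M : Type u} [Field C]
    [IsAlgClosed C] [Ring A] [Ring B] [Algebra C A] [Algebra C B] [AddCommGroup M] [Module C M]
    [Module A M] [Module B M] [IsScalarTower C A M] [IsScalarTower C B M] [SMulCommClass A B M]
    [Module (A ⊗[C] B) M] [IsScalarTower C (A ⊗[C] B) M] [IsSimpleModule (A ⊗[C] B) M]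
    [FiniteDimensional C M]
    (hAB : ∀ (a : A) (b : B) (m : M), (a ⊗ₜ[C] b) • m = a • b • m)
    (S : Submodule A M) [IsSimpleModule A S] : ExtTensorFactorization C A B M where
  M₁ := S
  M₂ := S →ₗ[A] M
  simple₁ := ‹_›
  simple₂ := isSimpleModule_linearMap hAB S
  equiv := (LinearEquiv.ofBijective _ (bijective_tensorHomEval hAB S)).symm
  equiv_smul a b m := by
    let e := LinearEquiv.ofBijective _ (bijective_tensorHomEval hAB S)
    rw [e.symm_apply_eq]
    exact (congrArg _ (e.apply_symm_apply m)).symm.trans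
      (tensorHomEval_map_smul C A S M hAB a b (e.symm m)).symm

/-- Let `A, B` be algebras over an algebraically closed field `C`.  Every
finite-dimensional simple module over `A ⊗_C B` is isomorphic to an external
tensor product `M₁ ⊗_C M₂` of a simple `A`-module and a simple `B`-module. -/
theorem simple_module_over_tensor_is_factorizable
    (C : Type u) [Field C] [IsAlgClosed C]
    (A B : Type u) [Ring A] [Ring B] [Algebra C A] [Algebra C B]
    (M : Type u) [AddCommGroup M] [Module (A ⊗[C] B) M]
    [Module C M] [IsScalarTower C (A ⊗[C] B) M]
    [IsSimpleModule (A ⊗[C] B) M] [FiniteDimensional C M] :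
    Nonempty (ExtTensorFactorization C A B M) := by
  let _ : Module A M :=
    .compHom M (Algebra.TensorProduct.includeLeft : A →ₐ[C] A ⊗[C] B).toRingHom
  let _ : Module B M :=
    .compHom M (Algebra.TensorProduct.includeRight : B →ₐ[C] A ⊗[C] B).toRingHom
  have hAB (a : A) (b : B) (m : M) : (a ⊗ₜ[C] b) • m = a • b • m := by
    change _ = (a ⊗ₜ[C] (1 : B)) • ((1 : A) ⊗ₜ[C] b) • m
    rw [← mul_smul, Algebra.TensorProduct.tmul_mul_tmul, mul_one, one_mul]
  have := smulCommClass_of_tmul_smul hAB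
  have := isScalarTower_left_of_tmul_smul hAB
  have := isScalarTower_right_of_tmul_smul hAB
  have := IsSimpleModule.nontrivial (A ⊗[C] B) M
  have : IsArtinian A M := isArtinian_of_tower C inferInstance
  obtain ⟨S, hS⟩ := IsAtomic.exists_atom (Submodule A M)
  have := isSimpleModule_iff_isAtom.mpr hS
  exact ⟨.ofIsSimpleModule hAB S⟩
end
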